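/- arXiv:1803.09212 — 2 statements merged into one kernel-verified Lean document; each statement's English description precedes it below -/
import Mathlib

section
/- Let S₁ = E₁₂ and S₂ = E₂₁ be the elementary 2×2 matrices. Suppose M₁, M₂ are normal operators on a Hilbert space K, V : ℂ² → K is an isometry with V*M_iV = S_i for i = 1, 2, M₁M₂ = 0 = M₂M₁, M₁M₂* = 0 = M₁*M₂, and ‖M_i‖ ≤ r for both i. Then r ≥ 2. -/
/-!
Put `T = M₁ + M₂⋆`. Compressing by the isometry `V` gives `V⋆TV = S₁ + S₂⋆ = 2E₁₂`, so
`‖T‖ ≥ 2`. On the other hand `T⋆T = M₁⋆M₁ + M₂M₂⋆` is a sum of two self-adjoint elements with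
vanishing product. For such `a, b` the C⋆-identity `‖x ^ 2 ^ n‖ = ‖x‖ ^ 2 ^ n` turns
`(a + b) ^ 2 ^ n = a ^ 2 ^ n + b ^ 2 ^ n` into `‖a + b‖ ^ 2 ^ n ≤ 2 * max ‖a‖ ‖b‖ ^ 2 ^ n` for
every `n`, whence `‖a + b‖ ≤ max ‖a‖ ‖b‖`. So `‖T‖ ^ 2 = ‖T⋆T‖ ≤ max ‖M₁‖ ‖M₂‖ ^ 2 ≤ r ^ 2`.
-/

open ContinuousLinearMap Filter Topology

theorem add_pow_of_mul_eq_zero {R : Type*} [Semiring R] {a b : R}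
    (hab : a * b = 0) (hba : b * a = 0) {n : ℕ} (hn : n ≠ 0) :
    (a + b) ^ n = a ^ n + b ^ n := by
  induction n with
  | zero => contradiction
  | succ n ih =>
    rcases eq_or_ne n 0 with rfl | hn
    · simp
    obtain ⟨k, rfl⟩ := Nat.exists_eq_succ_of_ne_zero hn
    have hab' : a ^ (k + 1) * b = 0 := by rw [pow_succ, mul_assoc, hab, mul_zero]
    have hba' : b ^ (k + 1) * a = 0 := by rw [pow_succ, mul_assoc, hba, mul_zero]
    rw [pow_succ, ih hn, add_mul, mul_add, mul_add, hab', hba', add_zero, zero_add,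
      ← pow_succ, ← pow_succ]

theorem le_of_forall_pow_two_pow_le_mul_pow {c m C : ℝ} (hm : 0 ≤ m)
    (h : ∀ n : ℕ, c ^ 2 ^ n ≤ C * m ^ 2 ^ n) : c ≤ m := by
  by_contra! hmc
  have hc : 0 < c := hm.trans_lt hmc
  have hlim : Tendsto (fun n : ℕ ↦ C * (m / c) ^ 2 ^ n) atTop (𝓝 0) := by
    simpa using ((tendsto_pow_atTop_nhds_zero_of_lt_one (div_nonneg hm hc.le)
      ((div_lt_one hc).2 hmc)).comp
        (tendsto_pow_atTop_atTop_of_one_lt one_lt_two)).const_mul C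
  have hone : ∀ n : ℕ, 1 ≤ C * (m / c) ^ 2 ^ n := fun n ↦ by
    rw [div_pow, mul_div_assoc', le_div_iff₀ (by positivity), one_mul]
    exact h n
  exact absurd (ge_of_tendsto' hlim hone) (by norm_num)

section CStarRing

variable {E : Type*} [NormedRing E] [StarRing E] [CStarRing E]

theorem IsSelfAdjoint.norm_add_le_max_of_mul_eq_zero {a b : E} (ha : IsSelfAdjoint a)
    (hb : IsSelfAdjoint b) (hab : a * b = 0) : ‖a + b‖ ≤ max ‖a‖ ‖b‖ := by
  have hba : b * a = 0 := by simpa [ha.star_eq, hb.star_eq] using congr(star $hab)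
  refine le_of_forall_pow_two_pow_le_mul_pow (C := 2) ((norm_nonneg a).trans (le_max_left _ _))
    fun n ↦ ?_
  calc ‖a + b‖ ^ 2 ^ n = ‖a ^ 2 ^ n + b ^ 2 ^ n‖ := by
        rw [← (ha.add hb).norm_pow_two_pow, add_pow_of_mul_eq_zero hab hba (by positivity)]
    _ ≤ ‖a‖ ^ 2 ^ n + ‖b‖ ^ 2 ^ n := by
        rw [← ha.norm_pow_two_pow, ← hb.norm_pow_two_pow]
        exact norm_add_le _ _
    _ ≤ 2 * max ‖a‖ ‖b‖ ^ 2 ^ n := by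
        have := pow_le_pow_left₀ (norm_nonneg a) (le_max_left ‖a‖ ‖b‖) (2 ^ n)
        have := pow_le_pow_left₀ (norm_nonneg b) (le_max_right ‖a‖ ‖b‖) (2 ^ n)
        linarith

theorem norm_add_star_le_max_of_mul_eq_zero {a b : E} (hab : a * b = 0) (hba : b * a = 0) :
    ‖a + star b‖ ≤ max ‖a‖ ‖b‖ := by
  have hsplit : star (a + star b) * (a + star b) = star a * a + b * star b := by
    have : star a * star b = 0 := by rw [← star_mul, hba, star_zero]
    rw [star_add, star_star, add_mul, mul_add, mul_add, this, hba, add_zero, zero_add]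
  have horth : star a * a * (b * star b) = 0 := by
    rw [mul_assoc, ← mul_assoc a, hab, zero_mul, mul_zero]
  have hsq : ‖a + star b‖ ^ 2 ≤ max ‖a‖ ‖b‖ ^ 2 := by
    calc ‖a + star b‖ ^ 2 = ‖star a * a + b * star b‖ := by
          rw [sq, ← CStarRing.norm_star_mul_self, hsplit]
      _ ≤ max ‖star a * a‖ ‖b * star b‖ :=
          (IsSelfAdjoint.star_mul_self a).norm_add_le_max_of_mul_eq_zero
            (IsSelfAdjoint.mul_star_self b) horth
      _ ≤ max ‖a‖ ‖b‖ ^ 2 := by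
          rw [CStarRing.norm_star_mul_self, CStarRing.norm_self_mul_star, ← sq, ← sq]
          exact max_le (by gcongr; exact le_max_left _ _) (by gcongr; exact le_max_right _ _)
  exact (pow_le_pow_iff_left₀ (norm_nonneg _) ((norm_nonneg a).trans (le_max_left _ _))
    two_ne_zero).1 hsq

end CStarRing

namespace ContinuousLinearMap

variable {𝕜 E F : Type*} [RCLike 𝕜] [NormedAddCommGroup E] [InnerProductSpace 𝕜 E]
  [CompleteSpace E] [NormedAddCommGroup F] [InnerProductSpace 𝕜 F] [CompleteSpace F]

theorem norm_adjoint_comp_comp_le {V : E →L[𝕜] F} (hV : ‖V‖ ≤ 1) (T : F →L[𝕜] F) :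
    ‖adjoint V ∘L T ∘L V‖ ≤ ‖T‖ :=
  calc ‖adjoint V ∘L T ∘L V‖ ≤ ‖adjoint V‖ * (‖T‖ * ‖V‖) :=
        (opNorm_comp_le _ _).trans (by gcongr; exact opNorm_comp_le _ _)
    _ ≤ 1 * (‖T‖ * 1) := by rw [LinearIsometryEquiv.norm_map]; gcongr
    _ = ‖T‖ := by ring

theorem adjoint_comp_star_comp (V : E →L[𝕜] F) (T : F →L[𝕜] F) :
    adjoint V ∘L star T ∘L V = adjoint (adjoint V ∘L T ∘L V) := by
  rw [adjoint_comp, adjoint_comp, adjoint_adjoint, star_eq_adjoint, comp_assoc]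

end ContinuousLinearMap

theorem Matrix.norm_le_norm_toEuclideanCLM_single {𝕜 n : Type*} [RCLike 𝕜] [Fintype n]
    [DecidableEq n] (i j : n) (c : 𝕜) :
    ‖c‖ ≤ ‖toEuclideanCLM (𝕜 := 𝕜) (n := n) (single i j c)‖ := by
  have hval : toEuclideanCLM (𝕜 := 𝕜) (n := n) (single i j c) (EuclideanSpace.single j 1)
      = EuclideanSpace.single i c := by
    apply WithLp.ofLp_injective
    ext k
    simp [ofLp_toEuclideanCLM, single_apply, and_comm, eq_comm]
  simpa [hval] using
    (toEuclideanCLM (𝕜 := 𝕜) (n := n) (single i j c)).le_opNorm (EuclideanSpace.single j 1)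

theorem dilation_scale_two_le_general {K : Type*} [NormedAddCommGroup K]
    [InnerProductSpace ℂ K] [CompleteSpace K]
    (M₁ M₂ : K →L[ℂ] K)
    (V : EuclideanSpace ℂ (Fin 2) →L[ℂ] K) (hV : ∀ x, ‖V x‖ = ‖x‖)
    (hc₁ : ContinuousLinearMap.adjoint V ∘L M₁ ∘L V
      = Matrix.toEuclideanCLM (𝕜 := ℂ) (n := Fin 2) (Matrix.single 0 1 1))
    (hc₂ : ContinuousLinearMap.adjoint V ∘L M₂ ∘L V
      = Matrix.toEuclideanCLM (𝕜 := ℂ) (n := Fin 2) (Matrix.single 1 0 1))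
    (h₁ : M₁ * M₂ = 0) (h₂ : M₂ * M₁ = 0)
    (r : ℝ) (hr₁ : ‖M₁‖ ≤ r) (hr₂ : ‖M₂‖ ≤ r) :
    2 ≤ r := by
  have hV₁ : ‖V‖ ≤ 1 := opNorm_le_bound _ zero_le_one fun x ↦ by rw [hV, one_mul]
  have hc₂' : adjoint V ∘L star M₂ ∘L V
      = Matrix.toEuclideanCLM (𝕜 := ℂ) (Matrix.single 0 1 1) := by
    rw [adjoint_comp_star_comp, hc₂, ← star_eq_adjoint, ← map_star, Matrix.star_eq_conjTranspose,
      Matrix.conjTranspose_single, star_one]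
  have hcomp : adjoint V ∘L (M₁ + star M₂) ∘L V
      = Matrix.toEuclideanCLM (𝕜 := ℂ) (Matrix.single 0 1 2) := by
    rw [add_comp, comp_add, hc₁, hc₂', ← map_add, ← Matrix.single_add, one_add_one_eq_two]
  calc (2 : ℝ) = ‖(2 : ℂ)‖ := by norm_num
    _ ≤ ‖adjoint V ∘L (M₁ + star M₂) ∘L V‖ :=
        hcomp ▸ Matrix.norm_le_norm_toEuclideanCLM_single _ _ _
    _ ≤ ‖M₁ + star M₂‖ := norm_adjoint_comp_comp_le hV₁ _
    _ ≤ max ‖M₁‖ ‖M₂‖ := norm_add_star_le_max_of_mul_eq_zero h₁ h₂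
    _ ≤ r := max_le hr₁ hr₂

/-- Let `S₁ = E₁₂`, `S₂ = E₂₁` be the elementary `2 × 2` matrices. Suppose `M₁, M₂` are
normal operators on a Hilbert space `K`, `V : ℂ² → K` is an isometry with `V*M_iV = S_i`,
`M₁M₂ = 0 = M₂M₁`, `M₁M₂* = 0 = M₁*M₂`, and `‖M_i‖ ≤ r` for both `i`. Then `r ≥ 2`. -/
theorem dilation_scale_two_le {K : Type*} [NormedAddCommGroup K]
    [InnerProductSpace ℂ K] [CompleteSpace K]
    (M₁ M₂ : K →L[ℂ] K) (hM₁ : IsStarNormal M₁) (hM₂ : IsStarNormal M₂)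
    (V : EuclideanSpace ℂ (Fin 2) →L[ℂ] K) (hV : ∀ x, ‖V x‖ = ‖x‖)
    (hc₁ : ContinuousLinearMap.adjoint V ∘L M₁ ∘L V
      = Matrix.toEuclideanCLM (𝕜 := ℂ) (n := Fin 2) (Matrix.single 0 1 1))
    (hc₂ : ContinuousLinearMap.adjoint V ∘L M₂ ∘L V
      = Matrix.toEuclideanCLM (𝕜 := ℂ) (n := Fin 2) (Matrix.single 1 0 1))
    (h₁ : M₁ * M₂ = 0) (h₂ : M₂ * M₁ = 0)
    (h₃ : M₁ * star M₂ = 0) (h₄ : star M₁ * M₂ = 0)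
    (r : ℝ) (hr₁ : ‖M₁‖ ≤ r) (hr₂ : ‖M₂‖ ≤ r) :
    2 ≤ r :=
  dilation_scale_two_le_general M₁ M₂ V hV hc₁ hc₂ h₁ h₂ r hr₁ hr₂
end

section
/- Let A₁, …, A_d be pairwise anticommuting self-adjoint operators on a Hilbert space H with ‖A_j‖ ≤ a_j for positive reals a_j. Then there exist pairwise anticommuting self-adjoint operators M₁, …, M_d on H ⊗ ℂ^{2^d} with M_j² = a_j² I, such that each M_j dilates A_j (i.e. V*M_jV = A_j for a common isometry V : H → H ⊗ ℂ^{2^d}). -/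
open ContinuousLinearMap

/-- The canonical uniform equivalence between `PiLp 2` and the product, used to supply the
(missing) completeness instance on finite `ℓ²` direct sums. -/
noncomputable def piLpUniformEquiv {H : Type*} [NormedAddCommGroup H] {m : ℕ} :
    PiLp 2 (fun _ : Fin m => H) ≃ᵤ (Fin m → H) where
  toEquiv := WithLp.equiv 2 _
  uniformContinuous_toFun := by exact PiLp.uniformContinuous_ofLp ..
  uniformContinuous_invFun := by exact PiLp.uniformContinuous_toLp ..

instance piLp_completeSpace {H : Type*} [NormedAddCommGroup H] [CompleteSpace H] {m : ℕ} :
    CompleteSpace (PiLp 2 (fun _ : Fin m => H)) :=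
  (piLpUniformEquiv (H := H) (m := m)).completeSpace_iff.mpr inferInstance

/-!
Write `ℂ^{2^d} = (ℂ²)^{⊗d}`, let `X, Z` be the Pauli matrices and `D_j = √(a_j² - A_j²)`. Then
`M_j = A_j ⊗ Z^{⊗d} + D_j ⊗ I^{⊗j} ⊗ X ⊗ Z^{⊗(d-j-1)}` works, with `V x = x ⊗ e_{0…0}`: this is the
paper's iterated Halmos dilation in closed form. Each `M_j` is the Halmos unitary dilation
`[[A_j, D_j], [D_j, -A_j]]` acting in the `j`-th factor, so `M_j² = (A_j² + D_j²) ⊗ I = a_j²`, and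
the Jordan–Wigner strings of `Z`s make `M_i` and `M_j` anticommute. This needs `D_j` to commute
with `A_i` and with `D_i`, which holds because `A_i` anticommutes with `A_j`, hence commutes with
`A_j²` and so with every continuous function of it.
-/

section Anticommutation
variable {R : Type*}

lemma add_mul_add_eq_neg [NonUnitalNonAssocRing R] {x y x' y' : R} (h₁ : x * x' = -(x' * x))
    (h₂ : x * y' = -(y' * x)) (h₃ : y * x' = -(x' * y)) (h₄ : y * y' = -(y' * y)) :
    (x + y) * (x' + y') = -((x' + y') * (x + y)) := by
  simp only [add_mul, mul_add, h₁, h₂, h₃, h₄]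
  abel

lemma add_mul_self_of_mul_eq_neg [NonUnitalNonAssocRing R] {x y : R} (h : x * y = -(y * x)) :
    (x + y) * (x + y) = x * x + y * y := by
  rw [add_mul, mul_add, mul_add, h]
  abel

lemma commute_mul_self_of_mul_eq_neg [Ring R] {x y : R} (h : x * y = -(y * x)) :
    Commute x (y * y) :=
  calc x * (y * y) = -(y * x) * y := by rw [← mul_assoc, h]
    _ = y * -(x * y) := by noncomm_ring
    _ = y * y * x := by rw [h, neg_neg, mul_assoc]

end Anticommutation

section HalmosDefect

variable {𝔄 : Type*} [CStarAlgebra 𝔄] [PartialOrder 𝔄] [StarOrderedRing 𝔄]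

/-- The off-diagonal entry of the Halmos dilation `[[x, D], [D, -x]]` of `x`. -/
noncomputable def halmosDefect (a : ℝ) (x : 𝔄) : 𝔄 := CFC.sqrt (algebraMap ℝ 𝔄 (a ^ 2) - x * x)

lemma isSelfAdjoint_halmosDefect (a : ℝ) (x : 𝔄) : IsSelfAdjoint (halmosDefect a x) :=
  (CFC.sqrt_nonneg _).isSelfAdjoint

lemma mul_self_add_halmosDefect_mul_self {a : ℝ} {x : 𝔄} (hx : IsSelfAdjoint x)
    (hxa : ‖x‖ ≤ a) :
    x * x + halmosDefect a x * halmosDefect a x = algebraMap ℝ 𝔄 (a ^ 2) := by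
  rw [halmosDefect, CFC.sqrt_mul_sqrt_self _ (sub_nonneg.mpr ?_), add_sub_cancel]
  calc x * x = star x * x := by rw [hx.star_eq]
    _ ≤ algebraMap ℝ 𝔄 (‖x‖ ^ 2) := CStarAlgebra.star_mul_le_algebraMap_norm_sq
    _ ≤ algebraMap ℝ 𝔄 (a ^ 2) := algebraMap_mono 𝔄 (pow_le_pow_left₀ (norm_nonneg x) hxa 2)

lemma Commute.halmosDefect_left {x y : 𝔄} (h : Commute (x * x) y) (a : ℝ) :
    Commute (halmosDefect a x) y :=
  ((Algebra.commute_algebraMap_left _ y).sub_left h).cfcₙ_nnreal _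

lemma commute_self_halmosDefect (x : 𝔄) (a : ℝ) : Commute x (halmosDefect a x) :=
  (((Commute.refl x).mul_left (.refl x)).halmosDefect_left a).symm

lemma commute_halmosDefect_of_mul_eq_neg {x y : 𝔄} (h : x * y = -(y * x)) (b : ℝ) :
    Commute x (halmosDefect b y) :=
  ((commute_mul_self_of_mul_eq_neg h).symm.halmosDefect_left b).symm

lemma commute_halmosDefect_halmosDefect_of_mul_eq_neg {x y : 𝔄} (h : x * y = -(y * x))
    (a b : ℝ) : Commute (halmosDefect a x) (halmosDefect b y) :=
  have hxy := commute_mul_self_of_mul_eq_neg h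
  ((hxy.mul_left hxy).halmosDefect_left a).symm.halmosDefect_left b |>.symm

end HalmosDefect

section Bits

variable {ι : Type*}

def flipBit [DecidableEq ι] (j : ι) (s : ι → Bool) : ι → Bool := Function.update s j (!s j)

@[simp]
lemma flipBit_flipBit [DecidableEq ι] (j : ι) (s : ι → Bool) : flipBit j (flipBit j s) = s := by
  simp [flipBit]

lemma flipBit_comm [DecidableEq ι] (i j : ι) (s : ι → Bool) :
    flipBit i (flipBit j s) = flipBit j (flipBit i s) := by
  ext k
  by_cases hi : k = i <;> by_cases hj : k = j <;> simp_all [flipBit, Function.update_apply]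

@[simp]
lemma flipBit_ne [DecidableEq ι] (j : ι) (s : ι → Bool) : flipBit j s ≠ s :=
  fun h => by simpa [flipBit] using congrFun h j

def paritySign (T : Finset ι) (s : ι → Bool) : ℝ := ∏ k ∈ T, if s k then -1 else 1

lemma paritySign_flipBit [DecidableEq ι] (T : Finset ι) (j : ι) (s : ι → Bool) :
    paritySign T (flipBit j s) = if j ∈ T then -paritySign T s else paritySign T s := by
  split_ifs with hj
  · have hT : ∀ k ∈ T.erase j, flipBit j s k = s k := fun k hk =>
      Function.update_of_ne (Finset.ne_of_mem_erase hk) _ _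
    rw [paritySign, paritySign, ← Finset.mul_prod_erase T _ hj, ← Finset.mul_prod_erase T _ hj,
      Finset.prod_congr rfl fun k hk => by rw [hT k hk]]
    cases h : s j <;> simp [flipBit, h]
  · exact Finset.prod_congr rfl fun k hk =>
      by rw [flipBit, Function.update_of_ne (ne_of_mem_of_not_mem hk hj)]

@[simp]
lemma paritySign_mul_self (T : Finset ι) (s : ι → Bool) :
    paritySign T s * paritySign T s = 1 := by
  rw [paritySign, ← Finset.prod_mul_distrib]
  exact Finset.prod_eq_one fun k _ => by split_ifs <;> norm_num

@[simp]
lemma paritySign_const_false (T : Finset ι) : paritySign T (fun _ => false) = 1 := by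
  simp [paritySign]

end Bits

section MonomialOp

variable {H : Type*} [NormedAddCommGroup H] [InnerProductSpace ℂ H] {S : Type*}

/-- The operator `B ⊗ P` on `ℓ²(S; H) = H ⊗ ℂ^S`, where `P` is the real monomial matrix
`P s t = ε s` for `t = σ s` and `0` otherwise. -/
noncomputable def monomialOp (σ : S → S) (ε : S → ℝ) (B : H →L[ℂ] H) :
    PiLp 2 (fun _ : S => H) →L[ℂ] PiLp 2 (fun _ : S => H) :=
  (PiLp.continuousLinearEquiv 2 ℂ (fun _ : S => H)).symm.toContinuousLinearMap ∘L
    ContinuousLinearMap.pi fun s => (ε s : ℂ) • B ∘L PiLp.proj 2 (fun _ : S => H) (σ s)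

@[simp]
lemma monomialOp_apply (σ : S → S) (ε : S → ℝ) (B : H →L[ℂ] H) (x : PiLp 2 (fun _ : S => H))
    (s : S) : monomialOp σ ε B x s = (ε s : ℂ) • B (x (σ s)) :=
  rfl

lemma monomialOp_mul (σ τ : S → S) (ε η : S → ℝ) (B C : H →L[ℂ] H) :
    monomialOp σ ε B * monomialOp τ η C = monomialOp (τ ∘ σ) (ε * η ∘ σ) (B * C) := by
  ext x s
  simp [mul_smul]

noncomputable def singleCLM [DecidableEq S] (s₀ : S) : H →L[ℂ] PiLp 2 (fun _ : S => H) :=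
  (PiLp.continuousLinearEquiv 2 ℂ (fun _ : S => H)).symm.toContinuousLinearMap ∘L
    ContinuousLinearMap.single ℂ (fun _ : S => H) s₀

@[simp]
lemma singleCLM_apply [DecidableEq S] (s₀ : S) (x : H) : singleCLM s₀ x = PiLp.single 2 s₀ x :=
  rfl

variable [Fintype S]

lemma monomialOp_neg_weight (σ : S → S) (ε : S → ℝ) (B : H →L[ℂ] H) :
    monomialOp σ (-ε) B = -monomialOp σ ε B := by
  ext x s
  simp

lemma monomialOp_neg (σ : S → S) (ε : S → ℝ) (B : H →L[ℂ] H) :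
    monomialOp σ ε (-B) = -monomialOp σ ε B := by
  ext x s
  simp

lemma monomialOp_add (σ : S → S) (ε : S → ℝ) (B C : H →L[ℂ] H) :
    monomialOp σ ε (B + C) = monomialOp σ ε B + monomialOp σ ε C := by
  ext x s
  simp

@[simp]
lemma monomialOp_id_one_smul_one (c : ℂ) :
    monomialOp (H := H) (S := S) id 1 (c • 1) = c • 1 := by
  ext x s
  simp

variable {σ τ : S → S} {ε η : S → ℝ} {B C : H →L[ℂ] H}

lemma monomialOp_mul_eq_neg_of_commute (hστ : τ ∘ σ = σ ∘ τ)
    (hεη : ε * η ∘ σ = -(η * ε ∘ τ)) (hBC : Commute B C) :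
    monomialOp σ ε B * monomialOp τ η C = -(monomialOp τ η C * monomialOp σ ε B) := by
  rw [monomialOp_mul, monomialOp_mul, hστ, hεη, hBC.eq, monomialOp_neg_weight]

lemma monomialOp_mul_eq_neg_of_mul_eq_neg (hστ : τ ∘ σ = σ ∘ τ)
    (hεη : ε * η ∘ σ = η * ε ∘ τ) (hBC : B * C = -(C * B)) :
    monomialOp σ ε B * monomialOp τ η C = -(monomialOp τ η C * monomialOp σ ε B) := by
  rw [monomialOp_mul, monomialOp_mul, hστ, hεη, hBC, monomialOp_neg]

variable [CompleteSpace H]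

lemma isSelfAdjoint_monomialOp (hσ : Function.Involutive σ) (hε : ∀ s, ε (σ s) = ε s)
    (hB : IsSelfAdjoint B) : IsSelfAdjoint (monomialOp σ ε B) := by
  have hB' : ∀ u v, inner ℂ (B u) v = inner ℂ u (B v) := isSelfAdjoint_iff_isSymmetric.mp hB
  rw [isSelfAdjoint_iff_isSymmetric]
  intro x y
  simp only [coe_coe, PiLp.inner_apply, monomialOp_apply, inner_smul_left, inner_smul_right,
    Complex.conj_ofReal]
  conv_lhs => rw [← Equiv.sum_comp hσ.toPerm]
  simp [hε, hσ _, hB']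

variable [DecidableEq S]

lemma adjoint_singleCLM (s₀ : S) :
    adjoint (singleCLM (H := H) s₀) = PiLp.proj 2 (fun _ : S => H) s₀ := by
  symm
  rw [eq_adjoint_iff]
  intro x y
  simp [PiLp.inner_apply, apply_ite (inner ℂ _)]

lemma adjoint_singleCLM_comp_monomialOp_comp_singleCLM (s₀ : S) (σ : S → S) (ε : S → ℝ)
    (B : H →L[ℂ] H) :
    adjoint (singleCLM s₀) ∘L monomialOp σ ε B ∘L singleCLM s₀ =
      if σ s₀ = s₀ then (ε s₀ : ℂ) • B else 0 := by
  ext x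
  split_ifs with h <;> simp [adjoint_singleCLM, h]

end MonomialOp

section JordanWigner

variable {H : Type*} [NormedAddCommGroup H] [InnerProductSpace ℂ H] {S : Type*} [Fintype S]
  {d : ℕ} (e : S ≃ (Fin d → Bool))

/-- Through `e`, `ℓ²(S; H) = H ⊗ (ℂ²)^{⊗d}`, and this is
`A ⊗ Z^{⊗d} + D ⊗ I^{⊗j} ⊗ X ⊗ Z^{⊗(d-j-1)}`: the Halmos dilation `[[A, D], [D, -A]]` in the
`j`-th tensor factor, dressed with Jordan–Wigner strings of `Z`s. -/
noncomputable def jordanWignerDilation (j : Fin d) (A D : H →L[ℂ] H) :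
    PiLp 2 (fun _ : S => H) →L[ℂ] PiLp 2 (fun _ : S => H) :=
  monomialOp id (paritySign Finset.univ ∘ e) A +
    monomialOp (e.symm ∘ flipBit j ∘ e) (paritySign (Finset.Ioi j) ∘ e) D

lemma isSelfAdjoint_jordanWignerDilation [CompleteSpace H] (j : Fin d) {A D : H →L[ℂ] H}
    (hA : IsSelfAdjoint A) (hD : IsSelfAdjoint D) :
    IsSelfAdjoint (jordanWignerDilation e j A D) := by
  have h1 : IsSelfAdjoint (monomialOp id (paritySign Finset.univ ∘ e) A) :=
    isSelfAdjoint_monomialOp (fun _ => rfl) (fun _ => rfl) hA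
  have h2 : IsSelfAdjoint
      (monomialOp (e.symm ∘ flipBit j ∘ e) (paritySign (Finset.Ioi j) ∘ e) D) := by
    refine isSelfAdjoint_monomialOp (fun s => ?_) (fun s => ?_) hD
    · simp
    · simp [paritySign_flipBit]
  rw [isSelfAdjoint_iff', jordanWignerDilation, map_add, h1.adjoint_eq, h2.adjoint_eq]

lemma jordanWignerDilation_mul_self (j : Fin d) {A D : H →L[ℂ] H} (hAD : Commute A D) :
    jordanWignerDilation e j A D * jordanWignerDilation e j A D =
      monomialOp id 1 (A * A + D * D) := by
  rw [jordanWignerDilation, add_mul_self_of_mul_eq_neg, monomialOp_mul, monomialOp_mul,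
    monomialOp_add]
  · congr 1 <;> congr 1
    · ext; simp
    · ext; simp
    · ext; simp [paritySign_flipBit]
  · exact monomialOp_mul_eq_neg_of_commute rfl (by ext; simp [paritySign_flipBit]; ring) hAD

lemma jordanWignerDilation_mul_eq_neg {i j : Fin d} (hij : i ≠ j) {A D A' D' : H →L[ℂ] H}
    (hAA' : A * A' = -(A' * A)) (hAD' : Commute A D') (hDA' : Commute D A')
    (hDD' : Commute D D') :
    jordanWignerDilation e i A D * jordanWignerDilation e j A' D' =
      -(jordanWignerDilation e j A' D' * jordanWignerDilation e i A D) := by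
  refine add_mul_add_eq_neg
    (monomialOp_mul_eq_neg_of_mul_eq_neg rfl (by ext; simp) hAA')
    (monomialOp_mul_eq_neg_of_commute rfl (by ext; simp [paritySign_flipBit]; ring) hAD')
    (monomialOp_mul_eq_neg_of_commute rfl (by ext; simp [paritySign_flipBit]; ring) hDA')
    (monomialOp_mul_eq_neg_of_commute (by ext; simp [flipBit_comm]) ?_ hDD')
  -- the `Z`-string of the smaller index meets the `X` of the larger one, but not conversely
  ext s
  rcases hij.lt_or_gt with h | h <;> simp [paritySign_flipBit, h, h.not_gt] <;> ring

lemma adjoint_singleCLM_comp_jordanWignerDilation_comp_singleCLM [CompleteSpace H]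
    [DecidableEq S] (j : Fin d) (A D : H →L[ℂ] H) :
    adjoint (singleCLM (e.symm fun _ => false)) ∘L jordanWignerDilation e j A D ∘L
      singleCLM (e.symm fun _ => false) = A := by
  rw [jordanWignerDilation, add_comp, comp_add, adjoint_singleCLM_comp_monomialOp_comp_singleCLM,
    adjoint_singleCLM_comp_monomialOp_comp_singleCLM]
  simp

end JordanWigner

theorem anticommuting_dilation_to_scaled_unitaries_general {H : Type*} [NormedAddCommGroup H]
    [InnerProductSpace ℂ H] [CompleteSpace H]
    (d : ℕ) (A : Fin d → (H →L[ℂ] H)) (a : Fin d → ℝ)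
    (hsa : ∀ j, IsSelfAdjoint (A j))
    (hac : ∀ i j, i ≠ j → A i * A j = -(A j * A i))
    (hnorm : ∀ j, ‖A j‖ ≤ a j) :
    ∃ (V : H →L[ℂ] PiLp 2 (fun _ : Fin (2 ^ d) => H))
      (M : Fin d → (PiLp 2 (fun _ : Fin (2 ^ d) => H) →L[ℂ]
        PiLp 2 (fun _ : Fin (2 ^ d) => H))),
      (∀ x, ‖V x‖ = ‖x‖) ∧
      (∀ j, IsSelfAdjoint (M j)) ∧
      (∀ i j, i ≠ j → M i * M j = -(M j * M i)) ∧
      (∀ j, M j * M j = ((a j ^ 2 : ℝ) : ℂ) • 1) ∧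
      (∀ j, ContinuousLinearMap.adjoint V ∘L M j ∘L V = A j) := by
  let e : Fin (2 ^ d) ≃ (Fin d → Bool) :=
    finFunctionFinEquiv.symm.trans (Equiv.arrowCongr (.refl _) finTwoEquiv)
  let D j := halmosDefect (a j) (A j)
  refine ⟨singleCLM (e.symm fun _ => false), fun j => jordanWignerDilation e j (A j) (D j),
    fun x => PiLp.norm_single .., fun j => ?_, fun i j hij => ?_, fun j => ?_,
    fun j => adjoint_singleCLM_comp_jordanWignerDilation_comp_singleCLM e j _ _⟩
  · exact isSelfAdjoint_jordanWignerDilation e j (hsa j) (isSelfAdjoint_halmosDefect _ _)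
  · exact jordanWignerDilation_mul_eq_neg e hij (hac i j hij)
      (commute_halmosDefect_of_mul_eq_neg (hac i j hij) _)
      (commute_halmosDefect_of_mul_eq_neg (hac j i hij.symm) _).symm
      (commute_halmosDefect_halmosDefect_of_mul_eq_neg (hac i j hij) _ _)
  · rw [jordanWignerDilation_mul_self e j (commute_self_halmosDefect _ _),
      mul_self_add_halmosDefect_mul_self (hsa j) (hnorm j), Algebra.algebraMap_eq_smul_one,
      ← Complex.coe_smul, monomialOp_id_one_smul_one]

/-- Let `A₁, …, A_d` be pairwise anticommuting self-adjoint operators on a complex Hilbert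
space `H` with `‖A_j‖ ≤ a_j` for positive reals `a_j`. Then there exist pairwise
anticommuting self-adjoint operators `M₁, …, M_d` on `H ⊗ ℂ^{2^d}` (realized as the
`2^d`-fold Hilbert space (`ℓ²`) direct sum of `H`) with `M_j² = a_j² I`, such that each
`M_j` dilates `A_j`: `V* M_j V = A_j` for one common isometry `V : H → H ⊗ ℂ^{2^d}`. -/
theorem anticommuting_dilation_to_scaled_unitaries {H : Type*} [NormedAddCommGroup H]
    [InnerProductSpace ℂ H] [CompleteSpace H]
    (d : ℕ) (A : Fin d → (H →L[ℂ] H)) (a : Fin d → ℝ) (ha : ∀ j, 0 < a j)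
    (hsa : ∀ j, IsSelfAdjoint (A j))
    (hac : ∀ i j, i ≠ j → A i * A j = -(A j * A i))
    (hnorm : ∀ j, ‖A j‖ ≤ a j) :
    ∃ (V : H →L[ℂ] PiLp 2 (fun _ : Fin (2 ^ d) => H))
      (M : Fin d → (PiLp 2 (fun _ : Fin (2 ^ d) => H) →L[ℂ]
        PiLp 2 (fun _ : Fin (2 ^ d) => H))),
      (∀ x, ‖V x‖ = ‖x‖) ∧
      (∀ j, IsSelfAdjoint (M j)) ∧
      (∀ i j, i ≠ j → M i * M j = -(M j * M i)) ∧
      (∀ j, M j * M j = ((a j ^ 2 : ℝ) : ℂ) • 1) ∧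
      (∀ j, ContinuousLinearMap.adjoint V ∘L M j ∘L V = A j) :=
  anticommuting_dilation_to_scaled_unitaries_general d A a hsa hac hnorm
end
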